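/- Let H and K be complex inner product spaces with dim(H) ≥ 2, and let A : H → K be a non-zero additive mapping preserving Euclidean orthogonality. Then the following are equivalent: (a) A is neither complex-linear nor conjugate-linear; (b) there exists a non-zero x ∈ H such that i A(x) ∉ A(H); (c) for every non-zero x ∈ H, i A(x) ∉ A(H). -/

import Mathlib

/-!
Orthogonality preservation alone gives `‖A x‖ = ‖A f‖` whenever `x ⊥ f` and `‖x‖ = ‖f‖`, and for
`dim H ≥ 2` every `x` has such a partner `f`. Splitting `s • x` orthogonally with the help of `f`
shows that `t ↦ ‖A (t • x)‖` is monotone on `[0, ∞)`, so `A` is bounded on real lines and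
therefore `ℝ`-linear.

The functions `u ↦ ‖A u‖²` and `u ↦ ⟪A u, A (I • u)⟫` are then additive on orthogonal pairs,
`|λ|²`-homogeneous and equal on orthogonal pairs of equal norm, hence multiples of `‖u‖²`. This
forces `⟪A u, A w⟫ = p ⟪u, w⟫ + q ⟪w, u⟫` with `p, q ≥ 0`: for `q = 0` the map `A` is
complex-linear, for `p = 0` conjugate-linear, and for `p, q > 0` the imaginary part of
`⟪A x, A y⟫ = I ‖A x‖²` shows that `A y = I • A x` only when `x = 0`.
-/

open scoped ComplexInnerProductSpace
open Complex ComplexConjugate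

section

variable {H K : Type*} [NormedAddCommGroup H] [InnerProductSpace ℂ H]
  [NormedAddCommGroup K] [InnerProductSpace ℂ K]

lemma exists_inner_eq_zero_norm_eq (hdim : 2 ≤ Module.rank ℂ H) (x : H) :
    ∃ f : H, ⟪x, f⟫ = 0 ∧ ‖f‖ = ‖x‖ := by
  have hspan : (ℂ ∙ x) ≠ ⊤ := by
    intro h
    have := rank_span_le (R := ℂ) ({x} : Set H)
    rw [h, rank_top, Cardinal.mk_singleton] at this
    exact absurd (hdim.trans this) (by norm_num)
  obtain ⟨g, hg, hg0⟩ := (Submodule.ne_bot_iff _).mp (mt Submodule.orthogonal_eq_bot_iff.mp hspan)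
  rw [Submodule.mem_orthogonal_singleton_iff_inner_right] at hg
  refine ⟨((‖x‖ / ‖g‖ : ℝ) : ℂ) • g, by rw [inner_smul_right, hg, mul_zero], ?_⟩
  rw [norm_smul, norm_real, Real.norm_of_nonneg (by positivity),
    div_mul_cancel₀ _ (norm_ne_zero_iff.mpr hg0)]

lemma norm_eq_norm_of_inner_add_sub_eq_zero {a b : K} (h : ⟪a + b, a - b⟫ = 0) : ‖a‖ = ‖b‖ := by
  let := InnerProductSpace.rclikeToReal ℂ K
  rw [← real_inner_add_sub_eq_zero_iff, real_inner_eq_re_inner ℂ, h, map_zero]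

theorem apply_eq_norm_sq_smul_of_norm_eq_one {E : Type*} [AddCommGroup E] [Module ℝ E]
    {F : H → E} (hadd : ∀ x y, ⟪x, y⟫ = 0 → F (x + y) = F x + F y)
    (hsmul : ∀ (l : ℂ) x, F (l • x) = ‖l‖ ^ 2 • F x)
    (horth : ∀ x y, ⟪x, y⟫ = 0 → ‖x‖ = ‖y‖ → F x = F y)
    {e : H} (he : ‖e‖ = 1) (u : H) : F u = ‖u‖ ^ 2 • F e := by
  set z := u - ⟪e, u⟫ • e
  have hez : ⟪e, z⟫ = 0 := by
    rw [inner_sub_right, inner_smul_right, inner_self_eq_norm_sq_to_K, he]; simp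
  have hu : u = ⟪e, u⟫ • e + z := (add_sub_cancel _ _).symm
  have hz : F z = ‖z‖ ^ 2 • F e := by
    rw [horth z ((‖z‖ : ℂ) • e), hsmul, norm_real, norm_norm]
    · rw [inner_smul_right, ← inner_conj_symm, hez, map_zero, mul_zero]
    · rw [norm_smul, norm_real, norm_norm, he, mul_one]
  have hpyth : ‖u‖ ^ 2 = ‖⟪e, u⟫‖ ^ 2 + ‖z‖ ^ 2 := by
    conv_lhs => rw [hu]
    rw [sq, sq, sq, norm_add_sq_eq_norm_sq_add_norm_sq_of_inner_eq_zero (𝕜 := ℂ), norm_smul, he,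
      mul_one]
    rw [inner_smul_left, hez, mul_zero]
  conv_lhs => rw [hu]
  rw [hadd _ _ (by rw [inner_smul_left, hez, mul_zero]), hsmul, hz, ← add_smul, ← hpyth]

lemma map_smul_of_inner_map_map_eq {A : H → K} {p : ℂ} (h : ∀ u w, ⟪A u, A w⟫ = p * ⟪u, w⟫)
    (l : ℂ) (x : H) : A (l • x) = l • A x := by
  rw [← sub_eq_zero, ← inner_self_eq_zero (𝕜 := ℂ)]
  simp only [inner_sub_left, inner_sub_right, inner_smul_left, inner_smul_right, h]
  ring

lemma map_smul_conj_of_inner_map_map_eq {A : H → K} {q : ℂ}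
    (h : ∀ u w, ⟪A u, A w⟫ = q * ⟪w, u⟫) (l : ℂ) (x : H) : A (l • x) = conj l • A x := by
  rw [← sub_eq_zero, ← inner_self_eq_zero (𝕜 := ℂ)]
  simp only [inner_sub_left, inner_sub_right, inner_smul_left, inner_smul_right, h, conj_conj]
  ring

lemma I_smul_notMem_range_of_inner_map_map_eq {A : H → K} {p q : ℝ} (hp : 0 < p) (hq : 0 < q)
    (h : ∀ u w, ⟪A u, A w⟫ = p * ⟪u, w⟫ + q * ⟪w, u⟫) {x : H} (hx : x ≠ 0) :
    I • A x ∉ Set.range A := by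
  rintro ⟨y, hy⟩
  have hN (u : H) : ‖A u‖ ^ 2 = (p + q) * ‖u‖ ^ 2 := by
    rw [@norm_sq_eq_re_inner ℂ, @norm_sq_eq_re_inner ℂ, h, ← add_mul, RCLike.re_to_complex,
      RCLike.re_to_complex, ← ofReal_add, re_ofReal_mul]
  have hyx : ‖y‖ = ‖x‖ := by
    have h' := hN y
    rw [hy, norm_smul, norm_I, one_mul, hN x] at h'
    exact (pow_left_inj₀ (norm_nonneg _) (norm_nonneg _) two_ne_zero).mp
      (mul_left_cancel₀ (by positivity) h').symm
  -- the imaginary part of `⟪A x, A y⟫ = I * ‖A x‖²`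
  have him : (p - q) * (⟪x, y⟫).im = (p + q) * ‖x‖ ^ 2 := by
    have h' := congrArg im (h x y)
    rw [hy, inner_smul_right, inner_self_eq_norm_sq_to_K, RCLike.ofReal_eq_complex_ofReal,
      ← ofReal_pow, hN x, ← inner_conj_symm y x] at h'
    simp only [add_im, mul_im, I_re, I_im, ofReal_re, ofReal_im, conj_re, conj_im] at h'
    linarith
  have hbound : |(⟪x, y⟫).im| ≤ ‖x‖ ^ 2 :=
    (abs_im_le_norm _).trans ((norm_inner_le_norm (𝕜 := ℂ) x y).trans (by rw [hyx, sq]))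
  obtain ⟨hlo, hhi⟩ := abs_le.mp hbound
  have hlo' := mul_nonneg hq.le (neg_le_iff_add_nonneg.mp hlo)
  have hhi' := mul_nonneg hp.le (sub_nonneg.mpr hhi)
  have h1 : p * (‖x‖ ^ 2 - (⟪x, y⟫).im) = 0 := by linarith
  have h2 : q * (‖x‖ ^ 2 + (⟪x, y⟫).im) = 0 := by linarith
  have h1 := (mul_eq_zero.mp h1).resolve_left hp.ne'
  have h2 := (mul_eq_zero.mp h2).resolve_left hq.ne'
  exact hx (norm_eq_zero.mp (pow_eq_zero_iff two_ne_zero |>.mp (by linarith)))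

def PreservesOrthogonality (A : H → K) : Prop :=
  ∀ x y : H, ⟪x, y⟫ = 0 → ⟪A x, A y⟫ = 0

namespace PreservesOrthogonality

variable {A : H →+ K}

lemma norm_map_eq (hA : PreservesOrthogonality A) {x f : H} (hxf : ⟪x, f⟫ = 0)
    (hn : ‖x‖ = ‖f‖) : ‖A x‖ = ‖A f‖ := by
  refine norm_eq_norm_of_inner_add_sub_eq_zero ?_
  rw [← map_add, ← map_sub]
  refine hA _ _ ?_
  rw [inner_add_left, inner_sub_right, inner_sub_right, hxf, inner_eq_zero_symm.mp hxf,
    inner_self_eq_norm_sq_to_K, inner_self_eq_norm_sq_to_K, hn]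
  ring

lemma norm_map_add_sq (hA : PreservesOrthogonality A) {u v : H} (h : ⟪u, v⟫ = 0) :
    ‖A (u + v)‖ ^ 2 = ‖A u‖ ^ 2 + ‖A v‖ ^ 2 := by
  rw [map_add, @norm_add_sq ℂ, hA u v h]
  simp

lemma norm_map_ofReal_smul_mono (hA : PreservesOrthogonality A) (hdim : 2 ≤ Module.rank ℂ H)
    (x : H) {a s : ℝ} (ha : 0 ≤ a) (has : a ≤ s) :
    ‖A ((a : ℂ) • x)‖ ≤ ‖A ((s : ℂ) • x)‖ := by
  obtain ⟨f, hxf, hf⟩ := exists_inner_eq_zero_norm_eq hdim x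
  have hfx : ⟪f, x⟫ = 0 := inner_eq_zero_symm.mp hxf
  set b : ℝ := √(a * (s - a))
  have hb : (b : ℂ) ^ 2 = a * (s - a) := by
    rw [← ofReal_pow, Real.sq_sqrt (by nlinarith)]; push_cast; ring
  have hsplit :
      (s : ℂ) • x = ((a : ℂ) • x + (b : ℂ) • f) + (((s : ℂ) - a) • x - (b : ℂ) • f) := by
    module
  have huv : ⟪(a : ℂ) • x + (b : ℂ) • f, ((s : ℂ) - a) • x - (b : ℂ) • f⟫ = 0 := by
    simp only [inner_add_left, inner_sub_right, inner_smul_left, inner_smul_right, hxf, hfx,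
      inner_self_eq_norm_sq_to_K, hf, conj_ofReal]
    linear_combination (-(‖x‖ : ℂ) ^ 2) * hb
  have hxf' : ⟪(a : ℂ) • x, (b : ℂ) • f⟫ = 0 := by
    rw [inner_smul_left, inner_smul_right, hxf, mul_zero, mul_zero]
  have h := hA.norm_map_add_sq huv
  rw [← hsplit, hA.norm_map_add_sq hxf'] at h
  refine (pow_le_pow_iff_left₀ (norm_nonneg _) (norm_nonneg _) two_ne_zero).mp ?_
  nlinarith [sq_nonneg ‖A ((b : ℂ) • f)‖, sq_nonneg ‖A (((s : ℂ) - a) • x - (b : ℂ) • f)‖]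

lemma norm_map_ofReal_smul_le (hA : PreservesOrthogonality A) (hdim : 2 ≤ Module.rank ℂ H)
    (t : ℝ) (x : H) : ‖A ((t : ℂ) • x)‖ ≤ 2 * |t| * ‖A x‖ := by
  suffices h : ∀ t : ℝ, 0 < t → ‖A ((t : ℂ) • x)‖ ≤ 2 * t * ‖A x‖ by
    rcases lt_trichotomy t 0 with ht | rfl | ht
    · have := h (-t) (neg_pos.mpr ht)
      rwa [ofReal_neg, neg_smul, map_neg, norm_neg, ← abs_of_neg ht] at this
    · simp
    · simpa [abs_of_pos ht] using h t ht
  intro t ht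
  -- compare with a rational multiple, on which `A` is homogeneous
  obtain ⟨q, htq, hq⟩ := exists_rat_btwn (lt_two_mul_self ht)
  have hAq : A (((q : ℝ) : ℂ) • x) = ((q : ℝ) : ℂ) • A x := by
    rw [ofReal_ratCast]; exact map_ratCast_smul A ℂ ℂ q x
  calc ‖A ((t : ℂ) • x)‖ ≤ ‖A (((q : ℝ) : ℂ) • x)‖ :=
        hA.norm_map_ofReal_smul_mono hdim x ht.le htq.le
    _ = q * ‖A x‖ := by
        rw [hAq, norm_smul, norm_real, Real.norm_of_nonneg (ht.trans htq).le]
    _ ≤ 2 * t * ‖A x‖ := by gcongr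

lemma map_ofReal_smul (hA : PreservesOrthogonality A) (hdim : 2 ≤ Module.rank ℂ H)
    (t : ℝ) (x : H) : A ((t : ℂ) • x) = (t : ℂ) • A x := by
  let g : ℝ →+ K := AddMonoidHom.mk' (fun t : ℝ => A ((t : ℂ) • x))
    (fun s t => by rw [ofReal_add, add_smul, map_add])
  have hg : Continuous g := AddMonoidHomClass.continuous_of_bound g (2 * ‖A x‖) fun t => by
    simpa [g, Real.norm_eq_abs, mul_right_comm] using hA.norm_map_ofReal_smul_le hdim t x
  simpa [g, Complex.coe_smul] using map_real_smul g hg t 1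

lemma map_smul_eq_re_smul_add_im_smul (hA : PreservesOrthogonality A)
    (hdim : 2 ≤ Module.rank ℂ H) (l : ℂ) (x : H) :
    A (l • x) = (l.re : ℂ) • A x + (l.im : ℂ) • A (I • x) := by
  conv_lhs => rw [← re_add_im l]
  rw [add_smul, mul_smul, map_add, hA.map_ofReal_smul hdim, hA.map_ofReal_smul hdim]

lemma inner_map_map_I_smul_eq (hA : PreservesOrthogonality A) {x f : H} (hxf : ⟪x, f⟫ = 0)
    (hn : ‖x‖ = ‖f‖) : ⟪A x, A (I • x)⟫ = ⟪A f, A (I • f)⟫ := by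
  have hfx : ⟪f, x⟫ = 0 := inner_eq_zero_symm.mp hxf
  have h : ⟪x + f, I • x - I • f⟫ = 0 := by
    simp only [inner_add_left, inner_sub_right, inner_smul_right, hxf, hfx,
      inner_self_eq_norm_sq_to_K, hn]
    ring
  have h := hA _ _ h
  rw [map_add, map_sub, inner_add_left, inner_sub_right, inner_sub_right,
    hA x (I • f) (by rw [inner_smul_right, hxf, mul_zero]),
    hA f (I • x) (by rw [inner_smul_right, hfx, mul_zero])] at h
  linear_combination h

lemma inner_map_map_I_smul_eq_neg_conj (hA : PreservesOrthogonality A) {x f : H}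
    (hxf : ⟪x, f⟫ = 0) (hn : ‖x‖ = ‖f‖) :
    ⟪A x, A (I • x)⟫ = -conj ⟪A f, A (I • f)⟫ := by
  have hfx : ⟪f, x⟫ = 0 := inner_eq_zero_symm.mp hxf
  have h : ⟪x + I • f, I • x + f⟫ = 0 := by
    simp only [inner_add_left, inner_add_right, inner_smul_left, inner_smul_right, hxf, hfx,
      inner_self_eq_norm_sq_to_K, hn, conj_I]
    ring
  have h := hA _ _ h
  rw [map_add, map_add, inner_add_left, inner_add_right, inner_add_right, hA x f hxf,
    hA (I • f) (I • x) (by rw [inner_smul_left, inner_smul_right, hfx, mul_zero, mul_zero]),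
    ← inner_conj_symm (A (I • f)) (A f)] at h
  linear_combination h

lemma inner_map_I_smul_map (hA : PreservesOrthogonality A) (hdim : 2 ≤ Module.rank ℂ H)
    (x : H) : ⟪A (I • x), A x⟫ = -⟪A x, A (I • x)⟫ := by
  obtain ⟨f, hxf, hf⟩ := exists_inner_eq_zero_norm_eq hdim x
  have horth := hA.inner_map_map_I_smul_eq hxf hf.symm
  have hanti := hA.inner_map_map_I_smul_eq_neg_conj hxf hf.symm
  rw [horth] at hanti
  rw [← inner_conj_symm, horth]
  linear_combination hanti

lemma re_inner_map_map_I_smul (hA : PreservesOrthogonality A) (hdim : 2 ≤ Module.rank ℂ H)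
    (x : H) : re ⟪A x, A (I • x)⟫ = 0 := by
  have h := inner_re_symm (𝕜 := ℂ) (A x) (A (I • x))
  rw [hA.inner_map_I_smul_map hdim, map_neg, RCLike.re_to_complex] at h
  linarith

lemma norm_map_I_smul (hA : PreservesOrthogonality A) (hdim : 2 ≤ Module.rank ℂ H) (x : H) :
    ‖A (I • x)‖ = ‖A x‖ := by
  obtain ⟨f, hxf, hf⟩ := exists_inner_eq_zero_norm_eq hdim x
  rw [hA.norm_map_eq hxf hf.symm, hA.norm_map_eq (x := I • x)]
  · rw [inner_smul_left, hxf, mul_zero]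
  · rw [norm_smul, norm_I, one_mul, hf]

lemma norm_map_smul_sq (hA : PreservesOrthogonality A) (hdim : 2 ≤ Module.rank ℂ H)
    (l : ℂ) (x : H) : ‖A (l • x)‖ ^ 2 = ‖l‖ ^ 2 * ‖A x‖ ^ 2 := by
  rw [hA.map_smul_eq_re_smul_add_im_smul hdim, @norm_add_sq ℂ, norm_smul, norm_smul,
    inner_smul_left, inner_smul_right, conj_ofReal, ← mul_assoc, ← ofReal_mul,
    RCLike.re_to_complex, re_ofReal_mul, hA.re_inner_map_map_I_smul hdim, hA.norm_map_I_smul hdim,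
    norm_real, norm_real, Real.norm_eq_abs, Real.norm_eq_abs, mul_pow, mul_pow, sq_abs, sq_abs,
    Complex.sq_norm, normSq_apply]
  ring

lemma inner_map_smul_map_I_smul (hA : PreservesOrthogonality A) (hdim : 2 ≤ Module.rank ℂ H)
    (l : ℂ) (x : H) :
    ⟪A (l • x), A (I • l • x)⟫ = (‖l‖ ^ 2 : ℝ) • ⟪A x, A (I • x)⟫ := by
  have hN : ⟪A (I • x), A (I • x)⟫ = ⟪A x, A x⟫ := by
    rw [inner_self_eq_norm_sq_to_K, inner_self_eq_norm_sq_to_K, hA.norm_map_I_smul hdim]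
  rw [smul_smul, hA.map_smul_eq_re_smul_add_im_smul hdim l x,
    hA.map_smul_eq_re_smul_add_im_smul hdim (I * l) x, I_mul_re, I_mul_im]
  simp only [inner_add_left, inner_add_right, inner_smul_left, inner_smul_right, conj_ofReal,
    hA.inner_map_I_smul_map hdim, hN, real_smul, Complex.sq_norm, normSq_apply]
  push_cast
  ring

lemma inner_map_add_map_I_smul_add (hA : PreservesOrthogonality A) {x y : H} (h : ⟪x, y⟫ = 0) :
    ⟪A (x + y), A (I • (x + y))⟫ = ⟪A x, A (I • x)⟫ + ⟪A y, A (I • y)⟫ := by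
  rw [smul_add, map_add, map_add, inner_add_left, inner_add_right, inner_add_right,
    hA x (I • y) (by rw [inner_smul_right, h, mul_zero]),
    hA y (I • x) (by rw [inner_smul_right, inner_eq_zero_symm.mp h, mul_zero])]
  ring

lemma inner_map_map_eq_of_norm_sq (hA : PreservesOrthogonality A) (hdim : 2 ≤ Module.rank ℂ H)
    {p q : ℝ} (hN : ∀ u, ‖A u‖ ^ 2 = (p + q) * ‖u‖ ^ 2)
    (hC : ∀ u, ⟪A u, A (I • u)⟫ = (p - q) * ‖u‖ ^ 2 * I) (u w : H) :
    ⟪A u, A w⟫ = p * ⟪u, w⟫ + q * ⟪w, u⟫ := by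
  rcases eq_or_ne u 0 with rfl | hu
  · simp
  -- `‖u‖² • w = ⟪u, w⟫ • u + w₀` with `w₀ ⊥ u`
  set w₀ := ((‖u‖ ^ 2 : ℝ) : ℂ) • w - ⟪u, w⟫ • u
  have hw₀ : ⟪u, w₀⟫ = 0 := by
    rw [inner_sub_right, inner_smul_right, inner_smul_right, inner_self_eq_norm_sq_to_K,
      RCLike.ofReal_eq_complex_ofReal]
    push_cast
    ring
  have hAu : ⟪A u, A u⟫ = ((p + q) * ‖u‖ ^ 2 : ℝ) := by
    rw [← hN, inner_self_eq_norm_sq_to_K]; norm_cast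
  have key : ((‖u‖ ^ 2 : ℝ) : ℂ) * ⟪A u, A w⟫
      = ((p + q) * (⟪u, w⟫).re + (p - q) * (⟪u, w⟫).im * I) * ‖u‖ ^ 2 :=
    calc ((‖u‖ ^ 2 : ℝ) : ℂ) * ⟪A u, A w⟫ = ⟪A u, A (⟪u, w⟫ • u + w₀)⟫ := by
          rw [add_sub_cancel, hA.map_ofReal_smul hdim, inner_smul_right]
      _ = (⟪u, w⟫).re * ⟪A u, A u⟫ + (⟪u, w⟫).im * ⟪A u, A (I • u)⟫ := by
          rw [map_add, inner_add_right, hA u w₀ hw₀, add_zero,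
            hA.map_smul_eq_re_smul_add_im_smul hdim, inner_add_right, inner_smul_right,
            inner_smul_right]
      _ = ((p + q) * (⟪u, w⟫).re + (p - q) * (⟪u, w⟫).im * I) * ‖u‖ ^ 2 := by
          rw [hAu, hC]
          push_cast
          ring
  have hz : ⟪u, w⟫ = (⟪u, w⟫).re + (⟪u, w⟫).im * I := (re_add_im _).symm
  have hz' : ⟪w, u⟫ = (⟪u, w⟫).re - (⟪u, w⟫).im * I := by
    rw [← inner_conj_symm w u]
    apply Complex.ext <;> simp only [conj_re, conj_im] <;> simp
  have hu2 : ((‖u‖ ^ 2 : ℝ) : ℂ) ≠ 0 := by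
    exact_mod_cast pow_ne_zero 2 (norm_ne_zero_iff.mpr hu)
  apply mul_left_cancel₀ hu2
  rw [key, hz']
  push_cast
  linear_combination -(‖u‖ : ℂ) ^ 2 * p * hz

theorem exists_inner_map_map_eq (hA : PreservesOrthogonality A) (hdim : 2 ≤ Module.rank ℂ H) :
    ∃ p q : ℝ, 0 ≤ p ∧ 0 ≤ q ∧ ∀ u w, ⟪A u, A w⟫ = p * ⟪u, w⟫ + q * ⟪w, u⟫ := by
  have : Nontrivial H := rank_pos_iff_nontrivial.mp (lt_of_lt_of_le (by norm_num) hdim)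
  obtain ⟨e, he⟩ := exists_norm_eq H zero_le_one
  set γ := ‖A e‖ ^ 2
  set τ := (⟪A e, A (I • e)⟫).im
  have hN (u : H) : ‖A u‖ ^ 2 = ‖u‖ ^ 2 * γ :=
    apply_eq_norm_sq_smul_of_norm_eq_one (F := fun u => ‖A u‖ ^ 2)
      (fun _ _ h => hA.norm_map_add_sq h) (hA.norm_map_smul_sq hdim)
      (fun _ _ h hn => by rw [hA.norm_map_eq h hn]) he u
  have hC (u : H) : ⟪A u, A (I • u)⟫ = ‖u‖ ^ 2 • ⟪A e, A (I • e)⟫ :=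
    apply_eq_norm_sq_smul_of_norm_eq_one (F := fun u => ⟪A u, A (I • u)⟫)
      (fun _ _ h => hA.inner_map_add_map_I_smul_add h) (hA.inner_map_smul_map_I_smul hdim)
      (fun _ _ h hn => hA.inner_map_map_I_smul_eq h hn) he u
  have hCe : ⟪A e, A (I • e)⟫ = τ * I := by
    apply Complex.ext <;> simp [τ, hA.re_inner_map_map_I_smul hdim]
  have hτ : |τ| ≤ γ := by
    have h := norm_inner_le_norm (𝕜 := ℂ) (A e) (A (I • e))
    rwa [hCe, hA.norm_map_I_smul hdim, norm_mul, norm_I, mul_one, norm_real, Real.norm_eq_abs,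
      ← sq] at h
  refine ⟨(γ + τ) / 2, (γ - τ) / 2, by linarith [neg_abs_le τ], by linarith [le_abs_self τ],
    hA.inner_map_map_eq_of_norm_sq hdim (fun u => by rw [hN]; ring) (fun u => ?_)⟩
  rw [hC, hCe, real_smul]
  push_cast
  ring

theorem map_smul_or_map_smul_conj_or_I_smul_notMem_range (hA : PreservesOrthogonality A)
    (hdim : 2 ≤ Module.rank ℂ H) :
    (∀ (l : ℂ) x, A (l • x) = l • A x) ∨ (∀ (l : ℂ) x, A (l • x) = conj l • A x) ∨
      ∀ x, x ≠ 0 → I • A x ∉ Set.range A := by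
  obtain ⟨p, q, hp, hq, h⟩ := hA.exists_inner_map_map_eq hdim
  rcases hq.eq_or_lt with rfl | hq
  · exact .inl (map_smul_of_inner_map_map_eq (p := p) (by simpa using h))
  rcases hp.eq_or_lt with rfl | hp
  · exact .inr (.inl (map_smul_conj_of_inner_map_map_eq (q := q) (by simpa using h)))
  · exact .inr (.inr fun x hx => I_smul_notMem_range_of_inner_map_map_eq hp hq h hx)

end PreservesOrthogonality

end

theorem characterization_not_complexLinear_additive_op_general
    {H K : Type*} [NormedAddCommGroup H] [InnerProductSpace ℂ H]
    [NormedAddCommGroup K] [InnerProductSpace ℂ K]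
    (hdim : 2 ≤ Module.rank ℂ H)
    (A : H → K)
    (hadd : ∀ x y, A (x + y) = A x + A y)
    (hop : ∀ x y : H, ⟪x, y⟫ = 0 → ⟪A x, A y⟫ = 0) :
    ((¬ (∀ (l : ℂ) (x : H), A (l • x) = l • A x) ∧
        ¬ (∀ (l : ℂ) (x : H), A (l • x) = (starRingEnd ℂ l) • A x)) ↔
      (∃ x : H, x ≠ 0 ∧ Complex.I • A x ∉ Set.range A)) ∧
    ((∃ x : H, x ≠ 0 ∧ Complex.I • A x ∉ Set.range A) ↔
      (∀ x : H, x ≠ 0 → Complex.I • A x ∉ Set.range A)) := by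
  obtain ⟨x₀, hx₀⟩ := rank_pos_iff_exists_ne_zero.mp (lt_of_lt_of_le (by norm_num) hdim)
  have hrange : (∀ (l : ℂ) x, A (l • x) = l • A x) ∨ (∀ (l : ℂ) x, A (l • x) = conj l • A x) →
      ∀ x, I • A x ∈ Set.range A := by
    rintro (h | h) x
    · exact ⟨I • x, h I x⟩
    · exact ⟨conj I • x, by rw [h, conj_conj]⟩
  obtain hlin | hc := or_assoc.mpr <|
    PreservesOrthogonality.map_smul_or_map_smul_conj_or_I_smul_notMem_range
      (A := AddMonoidHom.mk' A hadd) hop hdim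
  · have hR := hrange hlin
    exact ⟨iff_of_false (fun ha => hlin.elim ha.1 ha.2) fun ⟨x, _, hx⟩ => hx (hR x),
      iff_of_false (fun ⟨x, _, hx⟩ => hx (hR x)) fun hc => hc x₀ hx₀ (hR x₀)⟩
  · have hb : ∃ x : H, x ≠ 0 ∧ I • A x ∉ Set.range A := ⟨x₀, hx₀, hc x₀ hx₀⟩
    exact ⟨iff_of_true ⟨fun h => hc x₀ hx₀ (hrange (.inl h) x₀),
      fun h => hc x₀ hx₀ (hrange (.inr h) x₀)⟩ hb, iff_of_true hb hc⟩

/-- For a non-zero additive orthogonality preserving map `A` between complex inner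
product spaces (`dim H ≥ 2`), the following are equivalent: (a) `A` is neither
complex-linear nor conjugate-linear; (b) `i A(x) ∉ A(H)` for some non-zero `x`;
(c) `i A(x) ∉ A(H)` for every non-zero `x`. -/
theorem characterization_not_complexLinear_additive_op
    {H K : Type*} [NormedAddCommGroup H] [InnerProductSpace ℂ H]
    [NormedAddCommGroup K] [InnerProductSpace ℂ K]
    (hdim : 2 ≤ Module.rank ℂ H)
    (A : H → K) (hA : A ≠ 0)
    (hadd : ∀ x y, A (x + y) = A x + A y)
    (hop : ∀ x y : H, ⟪x, y⟫ = 0 → ⟪A x, A y⟫ = 0) :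
    ((¬ (∀ (l : ℂ) (x : H), A (l • x) = l • A x) ∧
        ¬ (∀ (l : ℂ) (x : H), A (l • x) = (starRingEnd ℂ l) • A x)) ↔
      (∃ x : H, x ≠ 0 ∧ Complex.I • A x ∉ Set.range A)) ∧
    ((∃ x : H, x ≠ 0 ∧ Complex.I • A x ∉ Set.range A) ↔
      (∀ x : H, x ≠ 0 → Complex.I • A x ∉ Set.range A)) :=
  characterization_not_complexLinear_additive_op_general hdim A hadd hop
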